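/- arXiv:2212.02151 — 2 statements merged into one kernel-verified Lean document; each statement's English description precedes it below -/
import Mathlib

section
/- Let a₂, b₃ ∈ ℂ[x,y,z] be homogeneous polynomials of degrees 2 and 3, and define Φ : ℂ⁴ → ℂ⁴ by Φ(t,x,y,z) = (a₂tz, x·(a₂t+b₃), y·(a₂t+b₃), z·(a₂t+b₃)). Set Δ = t·(a₂t + b₃) ∈ ℂ[t,x,y,z] and Δ' = T·b₃(X,Y,Z) ∈ ℂ[T,X,Y,Z]. Then Δ'(Φ(t,x,y,z)) = a₂(x,y,z)·z·b₃(x,y,z)·(a₂t+b₃)²·Δ(t,x,y,z) identically in ℂ[t,x,y,z]. -/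
/-! The last three coordinates of `Φ` are `x, y, z` scaled by `s = a₂t + b₃`, so homogeneity of
`b₃` gives `b₃ ∘ Φ = s³ b₃`, while `T ∘ Φ = a₂tz`. Hence `Δ' ∘ Φ = a₂tz s³ b₃ = a₂ z b₃ s² · Δ`. -/

open MvPolynomial

theorem MvPolynomial.IsHomogeneous.aeval_mul_const {σ R A : Type*} [CommSemiring R]
    [CommSemiring A] [Algebra R A] {p : MvPolynomial σ R} {n : ℕ} (hp : p.IsHomogeneous n)
    (v : σ → A) (s : A) :
    MvPolynomial.aeval (fun i => v i * s) p = s ^ n * MvPolynomial.aeval v p := by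
  simp only [aeval_def, eval₂_eq, Finset.mul_sum]
  refine Finset.sum_congr rfl fun d hd => ?_
  have hdeg : ∑ i ∈ d.support, d i = n := by
    rw [← Finsupp.degree_apply, Finsupp.degree_eq_weight_one]; exact hp (mem_support_iff.mp hd)
  simp only [mul_pow, Finset.prod_mul_distrib, Finset.prod_pow_eq_pow_sum, hdeg]
  ring

theorem stmt_15_general (a₂ b₃ : MvPolynomial (Fin 3) ℂ)
    (hb : b₃.IsHomogeneous 3)
    (Δ Δ' : MvPolynomial (Fin 4) ℂ)
    (hΔ : Δ = X 0 * (aeval ![(X 1 : MvPolynomial (Fin 4) ℂ), X 2, X 3] a₂ * X 0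
      + aeval ![(X 1 : MvPolynomial (Fin 4) ℂ), X 2, X 3] b₃))
    (hΔ' : Δ' = X 0 * aeval ![(X 1 : MvPolynomial (Fin 4) ℂ), X 2, X 3] b₃) :
    aeval ![aeval ![(X 1 : MvPolynomial (Fin 4) ℂ), X 2, X 3] a₂ * X 0 * X 3,
        X 1 * (aeval ![(X 1 : MvPolynomial (Fin 4) ℂ), X 2, X 3] a₂ * X 0
          + aeval ![(X 1 : MvPolynomial (Fin 4) ℂ), X 2, X 3] b₃),
        X 2 * (aeval ![(X 1 : MvPolynomial (Fin 4) ℂ), X 2, X 3] a₂ * X 0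
          + aeval ![(X 1 : MvPolynomial (Fin 4) ℂ), X 2, X 3] b₃),
        X 3 * (aeval ![(X 1 : MvPolynomial (Fin 4) ℂ), X 2, X 3] a₂ * X 0
          + aeval ![(X 1 : MvPolynomial (Fin 4) ℂ), X 2, X 3] b₃)] Δ'
      = aeval ![(X 1 : MvPolynomial (Fin 4) ℂ), X 2, X 3] a₂ * X 3
        * aeval ![(X 1 : MvPolynomial (Fin 4) ℂ), X 2, X 3] b₃
        * (aeval ![(X 1 : MvPolynomial (Fin 4) ℂ), X 2, X 3] a₂ * X 0
          + aeval ![(X 1 : MvPolynomial (Fin 4) ℂ), X 2, X 3] b₃) ^ 2 * Δ := by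
  subst hΔ hΔ'
  set w : Fin 3 → MvPolynomial (Fin 4) ℂ := ![X 1, X 2, X 3]
  set A := aeval w a₂
  set s := A * X 0 + aeval w b₃
  set Φ : Fin 4 → MvPolynomial (Fin 4) ℂ := ![A * X 0 * X 3, X 1 * s, X 2 * s, X 3 * s]
  have hΦw : (fun i => aeval Φ (w i)) = fun i => w i * s := by
    ext1 i; fin_cases i <;> simp [w, Φ]
  have hb₃ : aeval Φ (aeval w b₃) = s ^ 3 * aeval w b₃ := by
    rw [← AlgHom.comp_apply, comp_aeval, hΦw, hb.aeval_mul_const]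
  rw [map_mul, hb₃, aeval_X]
  simp only [Φ, Matrix.cons_val_zero]
  ring

/-- For `a₂, b₃ ∈ ℂ[x,y,z]` homogeneous of degrees `2, 3`, the polynomial lift
`Φ(t,x,y,z) = (a₂tz, x(a₂t+b₃), y(a₂t+b₃), z(a₂t+b₃))` of the map (ix) satisfies
`Δ'(Φ) = a₂·z·b₃·(a₂t+b₃)²·Δ`, where `Δ = t(a₂t+b₃)` and `Δ' = T·b₃(X,Y,Z)`.
Variables: in `ℂ[t,x,y,z]` we use `t = X 0`, `x = X 1`, `y = X 2`, `z = X 3`;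
in `ℂ[x,y,z]` we use `x = X 0`, `y = X 1`, `z = X 2`. -/
theorem stmt_15 (a₂ b₃ : MvPolynomial (Fin 3) ℂ)
    (ha : a₂.IsHomogeneous 2) (hb : b₃.IsHomogeneous 3)
    (Δ Δ' : MvPolynomial (Fin 4) ℂ)
    (hΔ : Δ = X 0 * (aeval ![(X 1 : MvPolynomial (Fin 4) ℂ), X 2, X 3] a₂ * X 0
      + aeval ![(X 1 : MvPolynomial (Fin 4) ℂ), X 2, X 3] b₃))
    (hΔ' : Δ' = X 0 * aeval ![(X 1 : MvPolynomial (Fin 4) ℂ), X 2, X 3] b₃) :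
    aeval ![aeval ![(X 1 : MvPolynomial (Fin 4) ℂ), X 2, X 3] a₂ * X 0 * X 3,
        X 1 * (aeval ![(X 1 : MvPolynomial (Fin 4) ℂ), X 2, X 3] a₂ * X 0
          + aeval ![(X 1 : MvPolynomial (Fin 4) ℂ), X 2, X 3] b₃),
        X 2 * (aeval ![(X 1 : MvPolynomial (Fin 4) ℂ), X 2, X 3] a₂ * X 0
          + aeval ![(X 1 : MvPolynomial (Fin 4) ℂ), X 2, X 3] b₃),
        X 3 * (aeval ![(X 1 : MvPolynomial (Fin 4) ℂ), X 2, X 3] a₂ * X 0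
          + aeval ![(X 1 : MvPolynomial (Fin 4) ℂ), X 2, X 3] b₃)] Δ'
      = aeval ![(X 1 : MvPolynomial (Fin 4) ℂ), X 2, X 3] a₂ * X 3
        * aeval ![(X 1 : MvPolynomial (Fin 4) ℂ), X 2, X 3] b₃
        * (aeval ![(X 1 : MvPolynomial (Fin 4) ℂ), X 2, X 3] a₂ * X 0
          + aeval ![(X 1 : MvPolynomial (Fin 4) ℂ), X 2, X 3] b₃) ^ 2 * Δ :=
  stmt_15_general a₂ b₃ hb Δ Δ' hΔ hΔ'
end

section
/- Let a₀, b₀, e₀ ∈ ℂ and let c, d, f, g, h : ℂ → ℂ be polynomial functions. Define F(t,x,z) = a₀t²z² + b₀t + c(z)txz + d(z)tz + e₀x³z + f(z)x² + g(z)x + h(z), G(z,u,v) = a₀v² + b₀v + c(z)uv + d(z)vz + e₀u³ + f(z)u² + g(z)uz + h(z)z², and ψ : ℂ³ → ℂ³ by ψ(t,x,z) = (z, xz, tz²). Then (i) G(z, xz, tz²) = z²·F(t,x,z) for all (t,x,z) ∈ ℂ³; (ii) ψ is complex differentiable everywhere with det(Dψ_(t,x,z)) = −z³; (iii) for every (t,x,z)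 with z ≠ 0 and F(t,x,z) ≠ 0, det(Dψ_(t,x,z)) · (z·G(ψ(t,x,z)))⁻¹ = −F(t,x,z)⁻¹. -/
/-- Linear equivalence between `Fin 3 → ℂ` and `ℂ × ℂ × ℂ`. -/
noncomputable def e3 : (Fin 3 → ℂ) ≃ₗ[ℂ] ℂ × ℂ × ℂ where
  toFun v := (v 0, v 1, v 2)
  invFun p := ![p.1, p.2.1, p.2.2]
  map_add' _ _ := rfl
  map_smul' _ _ := rfl
  left_inv v := by funext i; fin_cases i <;> rfl
  right_inv p := rfl

lemma det_via_e3 (L : (ℂ × ℂ × ℂ) →ₗ[ℂ] ℂ × ℂ × ℂ) :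
    LinearMap.det L = Matrix.det (LinearMap.toMatrix'
      ((e3.symm : (ℂ × ℂ × ℂ) →ₗ[ℂ] Fin 3 → ℂ) ∘ₗ L ∘ₗ (e3 : (Fin 3 → ℂ) →ₗ[ℂ] ℂ × ℂ × ℂ))) := by
  rw [LinearMap.det_toMatrix']
  exact (LinearMap.det_conj L e3.symm).symm

lemma e3_apply (v : Fin 3 → ℂ) : e3 v = (v 0, v 1, v 2) := rfl

lemma e3_symm_apply (p : ℂ × ℂ × ℂ) : e3.symm p = ![p.1, p.2.1, p.2.2] := rfl

/-- The affine-chart (y = 1) computation for the map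
`φ₁ : ℙ³ ⇢ ℙ(1,1,2,3)` of family (A.3). Coordinates: `F` is a function of `(t,x,z)`
(so `p = (t,x,z)` with `t = p.1`, `x = p.2.1`, `z = p.2.2`), `G` of `(z,u,v)`, and
`ψ(t,x,z) = (z, xz, tz²)`. -/
theorem stmt_16 (a₀ b₀ e₀ : ℂ) (c d f g h : Polynomial ℂ)
    (F : ℂ × ℂ × ℂ → ℂ)
    (hF : ∀ p : ℂ × ℂ × ℂ, F p = a₀ * p.1 ^ 2 * p.2.2 ^ 2 + b₀ * p.1
      + c.eval p.2.2 * p.1 * p.2.1 * p.2.2 + d.eval p.2.2 * p.1 * p.2.2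
      + e₀ * p.2.1 ^ 3 * p.2.2 + f.eval p.2.2 * p.2.1 ^ 2
      + g.eval p.2.2 * p.2.1 + h.eval p.2.2)
    (G : ℂ × ℂ × ℂ → ℂ)
    (hG : ∀ p : ℂ × ℂ × ℂ, G p = a₀ * p.2.2 ^ 2 + b₀ * p.2.2
      + c.eval p.1 * p.2.1 * p.2.2 + d.eval p.1 * p.2.2 * p.1
      + e₀ * p.2.1 ^ 3 + f.eval p.1 * p.2.1 ^ 2
      + g.eval p.1 * p.2.1 * p.1 + h.eval p.1 * p.1 ^ 2)
    (ψ : ℂ × ℂ × ℂ → ℂ × ℂ × ℂ)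
    (hψ : ∀ p : ℂ × ℂ × ℂ, ψ p = (p.2.2, p.2.1 * p.2.2, p.1 * p.2.2 ^ 2)) :
    (∀ p : ℂ × ℂ × ℂ, G (ψ p) = p.2.2 ^ 2 * F p) ∧
    (∀ p : ℂ × ℂ × ℂ, DifferentiableAt ℂ ψ p) ∧
    (∀ p : ℂ × ℂ × ℂ, LinearMap.det (fderiv ℂ ψ p).toLinearMap = -p.2.2 ^ 3) ∧
    (∀ p : ℂ × ℂ × ℂ, p.2.2 ≠ 0 → F p ≠ 0 →
      LinearMap.det (fderiv ℂ ψ p).toLinearMap * (p.2.2 * G (ψ p))⁻¹ = -(F p)⁻¹) := by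
  have hψ' : ψ = fun q : ℂ × ℂ × ℂ => (q.2.2, q.2.1 * q.2.2, q.1 * q.2.2 ^ 2) := funext hψ
  -- part (i)
  have part1 : ∀ p : ℂ × ℂ × ℂ, G (ψ p) = p.2.2 ^ 2 * F p := by
    intro p
    rw [hψ, hG, hF]
    simp only
    ring
  -- basic derivatives
  have hder : ∀ p : ℂ × ℂ × ℂ, HasFDerivAt ψ
      ((((ContinuousLinearMap.snd ℂ ℂ ℂ).comp (ContinuousLinearMap.snd ℂ ℂ (ℂ × ℂ)))).prod
        (((p.2.1 • ((ContinuousLinearMap.snd ℂ ℂ ℂ).comp (ContinuousLinearMap.snd ℂ ℂ (ℂ × ℂ))))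
          + (p.2.2 • ((ContinuousLinearMap.fst ℂ ℂ ℂ).comp (ContinuousLinearMap.snd ℂ ℂ (ℂ × ℂ))))).prod
         ((p.1 • (p.2.2 • ((ContinuousLinearMap.snd ℂ ℂ ℂ).comp (ContinuousLinearMap.snd ℂ ℂ (ℂ × ℂ)))
              + p.2.2 • ((ContinuousLinearMap.snd ℂ ℂ ℂ).comp (ContinuousLinearMap.snd ℂ ℂ (ℂ × ℂ)))))
          + ((p.2.2 * p.2.2) • ContinuousLinearMap.fst ℂ ℂ (ℂ × ℂ))))) p := by
    intro p
    have ht : HasFDerivAt (fun q : ℂ × ℂ × ℂ => q.1)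
        (ContinuousLinearMap.fst ℂ ℂ (ℂ × ℂ)) p := hasFDerivAt_fst
    have hx : HasFDerivAt (fun q : ℂ × ℂ × ℂ => q.2.1)
        ((ContinuousLinearMap.fst ℂ ℂ ℂ).comp (ContinuousLinearMap.snd ℂ ℂ (ℂ × ℂ))) p :=
      hasFDerivAt_fst.comp p hasFDerivAt_snd
    have hz : HasFDerivAt (fun q : ℂ × ℂ × ℂ => q.2.2)
        ((ContinuousLinearMap.snd ℂ ℂ ℂ).comp (ContinuousLinearMap.snd ℂ ℂ (ℂ × ℂ))) p :=
      hasFDerivAt_snd.comp p hasFDerivAt_snd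
    have h2 : HasFDerivAt (fun q : ℂ × ℂ × ℂ => q.2.1 * q.2.2) _ p := hx.mul hz
    have h3 : HasFDerivAt (fun q : ℂ × ℂ × ℂ => q.1 * (q.2.2 * q.2.2)) _ p := ht.mul (hz.mul hz)
    have hψ'' : ψ = fun q : ℂ × ℂ × ℂ => (q.2.2, q.2.1 * q.2.2, q.1 * (q.2.2 * q.2.2)) := by
      funext q; rw [hψ q]; exact Prod.ext rfl (Prod.ext rfl (by ring))
    rw [hψ'']
    exact HasFDerivAt.prodMk hz (HasFDerivAt.prodMk h2 h3)
  have part2 : ∀ p : ℂ × ℂ × ℂ, DifferentiableAt ℂ ψ p := fun p => (hder p).differentiableAt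
  -- determinant computation
  have part3 : ∀ p : ℂ × ℂ × ℂ, LinearMap.det (fderiv ℂ ψ p).toLinearMap = -p.2.2 ^ 3 := by
    intro p
    rw [(hder p).fderiv, det_via_e3, Matrix.det_fin_three]
    simp [LinearMap.toMatrix'_apply, e3_apply, e3_symm_apply, Pi.single_apply]
    ring
  refine ⟨part1, part2, part3, ?_⟩
  intro p hz0 hF0
  rw [part3 p, part1 p]
  field_simp
end
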